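/- arXiv:2012.05381 — 4 statements merged into one kernel-verified Lean document; each statement's English description precedes it below -/
import Mathlib

section
/- Let s ≥ 1 and let (A_m)_{m∈ℕ} and (B_k)_{k∈ℕ} be two sequences of positive real numbers. Then there exists a constant C_s > 0 (depending only on s) such that ∑_{m,k∈ℕ} A_m B_k^{1/s} / (2^m + 2^k)^{1/s} ≤ C_s ( max{ ∑_{m∈ℕ} A_m^{1+1/s} 2^{−m/s}, ∑_{k∈ℕ} B_k^{1+1/s} 2^{−k/s} } + ∑_{m∈ℕ} A_m B_m^{1/s} 2^{−m/s} ), where the inequality is understood in [0,∞] (in particular it is vacuous when the right-hand side is infinite). -/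
/-!
Put `p = 1 + 1/s` and its conjugate exponent `q = 1 + s`. Since `(2^m + 2^k)^{1/s} ≥ 2^{max(m,k)/s}`,
Young's inequality `XY ≤ X^p + Y^q` for `X = A_m 2^{-m/(s+1)}` and `Y = B_k^{1/s} 2^{-k/(s(s+1))}`
bounds the `(m, k)` term by `(A_m^p 2^{-m/s} + B_k^p 2^{-k/s}) t^{|m-k|}` with `t = 2^{-1/(s(s+1))} < 1`.
Summing `t^{|m-k|}` over one index costs at most `2/(1-t)`, so the double sum is at most `4/(1-t)`
times the larger of the two single sums.
-/

open ENNReal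

theorem ENNReal.tsum_pow_dist_le (t : ℝ≥0∞) (n : ℕ) :
    ∑' j, t ^ Nat.dist n j ≤ 2 * (1 - t)⁻¹ := by
  let e : ℕ → Bool × ℕ := fun j => if j ≤ n then (false, n - j) else (true, j - n)
  have he : Function.Injective e := by
    intro i j h
    simp only [e] at h
    split_ifs at h <;> simp only [Prod.mk.injEq, Bool.false_eq_true, Bool.true_eq_false,
      true_and, false_and] at h <;> omega
  calc ∑' j, t ^ Nat.dist n j = ∑' j, t ^ (e j).2 := by
        refine tsum_congr fun j => congrArg (t ^ ·) ?_
        simp only [e, Nat.dist]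
        split_ifs <;> omega
    _ ≤ ∑' x : Bool × ℕ, t ^ x.2 := ENNReal.tsum_comp_le_tsum_of_injective he _
    _ = 2 * (1 - t)⁻¹ := by
        simp [ENNReal.tsum_prod', ENNReal.tsum_geometric, two_mul]

theorem ENNReal.tsum_tsum_le_of_le_mul_pow_dist {f : ℕ → ℕ → ℝ≥0∞} (a b : ℕ → ℝ≥0∞)
    (t : ℝ≥0∞) (h : ∀ m k, f m k ≤ (a m + b k) * t ^ Nat.dist m k) :
    ∑' m, ∑' k, f m k ≤ 2 * (1 - t)⁻¹ * (∑' m, a m + ∑' k, b k) := by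
  have hsum (c : ℕ → ℝ≥0∞) :
      ∑' m, ∑' k, c m * t ^ Nat.dist m k ≤ 2 * (1 - t)⁻¹ * ∑' m, c m :=
    calc ∑' m, ∑' k, c m * t ^ Nat.dist m k = ∑' m, c m * ∑' k, t ^ Nat.dist m k :=
          tsum_congr fun m => ENNReal.tsum_mul_left
      _ ≤ ∑' m, c m * (2 * (1 - t)⁻¹) :=
          ENNReal.tsum_le_tsum fun m => mul_le_mul_right (tsum_pow_dist_le t m) _
      _ = 2 * (1 - t)⁻¹ * ∑' m, c m := by rw [ENNReal.tsum_mul_right, mul_comm]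
  calc ∑' m, ∑' k, f m k ≤ ∑' m, ∑' k, (a m + b k) * t ^ Nat.dist m k :=
        ENNReal.tsum_le_tsum fun m => ENNReal.tsum_le_tsum (h m)
    _ = ∑' m, ∑' k, a m * t ^ Nat.dist m k + ∑' k, ∑' m, b k * t ^ Nat.dist k m := by
        simp only [add_mul, ENNReal.tsum_add]
        rw [ENNReal.tsum_comm (f := fun m k => b k * t ^ Nat.dist m k)]
        simp only [Nat.dist_comm]
    _ ≤ 2 * (1 - t)⁻¹ * (∑' m, a m + ∑' k, b k) := by
        rw [mul_add]; exact add_le_add (hsum a) (hsum b)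

theorem div_add_dist_div_le_max_div {s : ℝ} (hs : 1 ≤ s) (m k : ℕ) :
    m / (s + 1) + k / (s * (s + 1)) + Nat.dist m k / (s * (s + 1)) ≤ max m k / s := by
  have hs0 : 0 < s := by linarith
  rcases le_total k m with hkm | hmk
  · rw [Nat.dist_eq_sub_of_le_right hkm, max_eq_left hkm, Nat.cast_sub hkm]
    apply le_of_eq
    field_simp
    ring
  · rw [Nat.dist_eq_sub_of_le hmk, max_eq_right hmk, Nat.cast_sub hmk]
    have hmk' : (m : ℝ) ≤ k := by exact_mod_cast hmk
    have hgap : k / s - (m / (s + 1) + k / (s * (s + 1)) + (k - m) / (s * (s + 1)))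
        = (s - 1) * (k - m) / (s * (s + 1)) := by
      field_simp
      ring
    have : 0 ≤ (s - 1) * (k - m) / (s * (s + 1)) :=
      div_nonneg (mul_nonneg (by linarith) (by linarith)) (by positivity)
    linarith

theorem two_pow_add_two_pow_rpow_inv_le {s : ℝ} (hs : 1 ≤ s) (m k : ℕ) :
    (((2 : ℝ≥0∞) ^ m + 2 ^ k) ^ (1 / s))⁻¹ ≤
      2 ^ (-(m : ℝ) / (s + 1)) * 2 ^ (-(k : ℝ) / (s * (s + 1)))
        * (2 ^ (-(1 / (s * (s + 1))))) ^ Nat.dist m k := by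
  have hmax : (2 : ℝ≥0∞) ^ ((max m k : ℕ) : ℝ) ≤ 2 ^ m + 2 ^ k := by
    rw [rpow_natCast]
    rcases max_cases m k with ⟨h, -⟩ | ⟨h, -⟩ <;> rw [h]
    exacts [le_self_add, le_add_self]
  calc (((2 : ℝ≥0∞) ^ m + 2 ^ k) ^ (1 / s))⁻¹
      ≤ (((2 : ℝ≥0∞) ^ ((max m k : ℕ) : ℝ)) ^ (1 / s))⁻¹ :=
        ENNReal.inv_le_inv.2 (ENNReal.rpow_le_rpow hmax (by positivity))
    _ = 2 ^ (-(((max m k : ℕ) : ℝ) / s)) := by rw [← rpow_mul, ← rpow_neg, mul_one_div]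
    _ ≤ 2 ^ (-(m / (s + 1) + k / (s * (s + 1)) + Nat.dist m k / (s * (s + 1)))) :=
        rpow_le_rpow_of_exponent_le one_le_two (neg_le_neg (div_add_dist_div_le_max_div hs m k))
    _ = _ := by
        rw [neg_add, neg_add, rpow_add _ _ two_ne_zero ofNat_ne_top,
          rpow_add _ _ two_ne_zero ofNat_ne_top, ← rpow_natCast, ← rpow_mul, neg_div, neg_div,
          neg_mul, one_div_mul_eq_div]

theorem ENNReal.mul_le_rpow_add_rpow (a b : ℝ≥0∞) {p q : ℝ} (hpq : p.HolderConjugate q) :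
    a * b ≤ a ^ p + b ^ q := by
  refine (young_inequality a b hpq).trans (add_le_add ?_ ?_) <;>
    exact ENNReal.div_le_of_le_mul
      (le_mul_of_one_le_right' (one_le_ofReal.2 (by linarith [hpq.lt, hpq.symm.lt])))

theorem Real.holderConjugate_one_add_one_div {s : ℝ} (hs : 0 < s) :
    (1 + 1 / s).HolderConjugate (1 + s) := by
  rw [Real.holderConjugate_iff]
  refine ⟨lt_add_of_pos_right 1 (by positivity), ?_⟩
  field_simp
  ring

theorem mul_rpow_div_two_pow_add_two_pow_le {s : ℝ} (hs : 1 ≤ s) (a b : ℝ≥0∞) (m k : ℕ) :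
    a * b ^ (1 / s) / ((2 : ℝ≥0∞) ^ m + 2 ^ k) ^ (1 / s) ≤
      (a ^ (1 + 1 / s) * 2 ^ (-(m : ℝ) / s) + b ^ (1 + 1 / s) * 2 ^ (-(k : ℝ) / s))
        * (2 ^ (-(1 / (s * (s + 1))))) ^ Nat.dist m k := by
  have hs0 : 0 < s := by linarith
  set X := a * (2 : ℝ≥0∞) ^ (-(m : ℝ) / (s + 1))
  set Y := b ^ (1 / s) * (2 : ℝ≥0∞) ^ (-(k : ℝ) / (s * (s + 1)))
  have hX : X ^ (1 + 1 / s) = a ^ (1 + 1 / s) * 2 ^ (-(m : ℝ) / s) := by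
    rw [mul_rpow_of_nonneg _ _ (by positivity), ← rpow_mul]
    congr 2
    field_simp
  have hY : Y ^ (1 + s) = b ^ (1 + 1 / s) * 2 ^ (-(k : ℝ) / s) := by
    rw [mul_rpow_of_nonneg _ _ (by positivity), ← rpow_mul, ← rpow_mul]
    congr 2 <;> field_simp <;> ring
  calc a * b ^ (1 / s) / ((2 : ℝ≥0∞) ^ m + 2 ^ k) ^ (1 / s)
      = a * b ^ (1 / s) * (((2 : ℝ≥0∞) ^ m + 2 ^ k) ^ (1 / s))⁻¹ := div_eq_mul_inv _ _
    _ ≤ a * b ^ (1 / s) * (2 ^ (-(m : ℝ) / (s + 1)) * 2 ^ (-(k : ℝ) / (s * (s + 1)))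
          * (2 ^ (-(1 / (s * (s + 1))))) ^ Nat.dist m k) := by
        gcongr; exact two_pow_add_two_pow_rpow_inv_le hs m k
    _ = X * Y * (2 ^ (-(1 / (s * (s + 1))))) ^ Nat.dist m k := by ring
    _ ≤ (X ^ (1 + 1 / s) + Y ^ (1 + s)) * (2 ^ (-(1 / (s * (s + 1))))) ^ Nat.dist m k := by
        gcongr; exact mul_le_rpow_add_rpow X Y (Real.holderConjugate_one_add_one_div hs0)
    _ = _ := by rw [hX, hY]

/-- For `s ≥ 1` there is a constant `C = C_s > 0` such that for all positive
sequences `(A_m)` and `(B_k)`,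
`∑_{m,k} A_m B_k^{1/s} / (2^m + 2^k)^{1/s} ≤ C (max{∑ A_m^{1+1/s} 2^{-m/s}, ∑ B_k^{1+1/s} 2^{-k/s}}
   + ∑ A_m B_m^{1/s} 2^{-m/s})`, the inequality being understood in `[0,∞]`. -/
theorem diagonal_double_sum_bound (s : ℝ) (hs : 1 ≤ s) :
    ∃ C : ℝ, 0 < C ∧
      ∀ A B : ℕ → ℝ, (∀ m, 0 < A m) → (∀ k, 0 < B k) →
        (∑' (m : ℕ) (k : ℕ),
            ENNReal.ofReal (A m) * ENNReal.ofReal (B k) ^ (1 / s)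
              / ((2 : ℝ≥0∞) ^ m + (2 : ℝ≥0∞) ^ k) ^ (1 / s))
          ≤ ENNReal.ofReal C *
            (max (∑' m : ℕ, ENNReal.ofReal (A m) ^ (1 + 1 / s) * (2 : ℝ≥0∞) ^ (-(m : ℝ) / s))
                 (∑' k : ℕ, ENNReal.ofReal (B k) ^ (1 + 1 / s) * (2 : ℝ≥0∞) ^ (-(k : ℝ) / s))
              + ∑' m : ℕ,
                  ENNReal.ofReal (A m) * ENNReal.ofReal (B m) ^ (1 / s)
                    * (2 : ℝ≥0∞) ^ (-(m : ℝ) / s)) := by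
  have hs0 : 0 < s := by linarith
  have ht : (2 : ℝ≥0∞) ^ (-(1 / (s * (s + 1)))) < 1 := by
    rw [rpow_neg, ENNReal.inv_lt_one]
    exact one_lt_rpow one_lt_two (by positivity)
  set t : ℝ≥0∞ := 2 ^ (-(1 / (s * (s + 1))))
  have hC : 4 * (1 - t)⁻¹ ≠ ∞ :=
    mul_ne_top ofNat_ne_top (inv_ne_top.2 (tsub_pos_of_lt ht).ne')
  refine ⟨(4 * (1 - t)⁻¹).toReal, toReal_pos (by simp) hC, fun A B _ _ => ?_⟩
  rw [ofReal_toReal hC]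
  set SA := ∑' m : ℕ, ENNReal.ofReal (A m) ^ (1 + 1 / s) * (2 : ℝ≥0∞) ^ (-(m : ℝ) / s)
  set SB := ∑' k : ℕ, ENNReal.ofReal (B k) ^ (1 + 1 / s) * (2 : ℝ≥0∞) ^ (-(k : ℝ) / s)
  calc _ ≤ 2 * (1 - t)⁻¹ * (SA + SB) :=
        tsum_tsum_le_of_le_mul_pow_dist _ _ t fun m k =>
          mul_rpow_div_two_pow_add_two_pow_le hs _ _ m k
    _ ≤ 2 * (1 - t)⁻¹ * (max SA SB + max SA SB) := by
        gcongr; exacts [le_max_left _ _, le_max_right _ _]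
    _ = 4 * (1 - t)⁻¹ * max SA SB := by ring
    _ ≤ _ := by gcongr; exact le_self_add
end

section
/- Let s ≥ 1, d ≥ 1, and let (N_m)_{m∈ℕ^d} be a family of positive real numbers indexed by multi-indices m = (m_1,…,m_d) ∈ ℕ^d such that ∑_{m∈ℕ^d} N_m^{1+1/s} 2^{−|m|/s} < ∞, where |m| = m_1 + ⋯ + m_d. Then ∑_{m∈ℕ^d} N_m ∑_{k∈ℕ^d} N_k^{1/s} ( ∏_{i=1}^d 1/(2^{m_i} + 2^{k_i}) )^{1/s} < ∞. -/
/-!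
Put `A m = N_m ^ (1 + 1/s) * 2 ^ (-|m|/s)`, summable by hypothesis, and `θ = s/(s+1)`.
Coordinatewise `max x y ≥ θ x + (1-θ) y + η |x - y|` for `η ≤ min θ (1-θ)`, so with
`η = s/(s+1)^2` the summand is at most `A m ^ θ * A k ^ (1-θ) * w m k ≤ (A m + A k) * w m k`
for the symmetric weight `w m k = 2 ^ (-‖m - k‖₁/(s+1)^2)`. The row sums of `w` are bounded by
`(∑_{z ∈ ℤ} 2 ^ (-|z|/(s+1)^2)) ^ d < ∞`, hence the double sum is at most that constant times
`2 ∑ A` (Schur's test).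
-/

open ENNReal Finset

namespace ENNReal

theorem rpow_sum {ι : Type*} {a : ℝ≥0∞} (ha₀ : a ≠ 0) (ha : a ≠ ⊤) (t : Finset ι) (f : ι → ℝ) :
    a ^ (∑ i ∈ t, f i) = ∏ i ∈ t, a ^ f i := by
  classical
  induction t using Finset.induction_on with
  | empty => simp
  | insert j t hj ih => rw [sum_insert hj, prod_insert hj, rpow_add _ _ ha₀ ha, ih]

theorem rpow_mul_rpow_le_add {p q : ℝ} (hp : 0 ≤ p) (hq : 0 ≤ q) (hpq : p + q = 1)
    (a b : ℝ≥0∞) : a ^ p * b ^ q ≤ a + b :=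
  calc a ^ p * b ^ q ≤ max a b ^ p * max a b ^ q := by gcongr <;> simp
    _ = max a b := by rw [← rpow_add_of_nonneg _ _ hp hq, hpq, rpow_one]
    _ ≤ a + b := max_le le_self_add le_add_self

theorem tsum_pi_prod_le {ι κ : Type*} [Fintype ι] (g : ι → κ → ℝ≥0∞) :
    ∑' k : ι → κ, ∏ i, g i (k i) ≤ ∏ i, ∑' n, g i n := by
  classical
  refine ENNReal.summable.tsum_le_of_sum_le fun S => ?_
  calc ∑ k ∈ S, ∏ i, g i (k i)
      ≤ ∑ k ∈ Fintype.piFinset fun i => S.image (· i), ∏ i, g i (k i) :=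
        sum_le_sum_of_subset fun k hk => Fintype.mem_piFinset.2 fun i => mem_image_of_mem _ hk
    _ = ∏ i, ∑ n ∈ S.image (· i), g i n := (prod_univ_sum _ _).symm
    _ ≤ ∏ i, ∑' n, g i n := by gcongr; exact ENNReal.sum_le_tsum _

theorem tsum_tsum_add_mul_le {ι : Type*} (A : ι → ℝ≥0∞) {w : ι → ι → ℝ≥0∞} {C : ℝ≥0∞}
    (hw : ∀ m k, w m k = w k m) (hC : ∀ m, ∑' k, w m k ≤ C) :
    ∑' m, ∑' k, (A m + A k) * w m k ≤ 2 * C * ∑' m, A m := by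
  have hrow : ∑' m, ∑' k, A m * w m k ≤ C * ∑' m, A m := by
    rw [← ENNReal.tsum_mul_left]
    gcongr with m
    rw [ENNReal.tsum_mul_left, mul_comm]
    gcongr
    exact hC m
  calc ∑' m, ∑' k, (A m + A k) * w m k
      = ∑' m, ∑' k, A m * w m k + ∑' k, ∑' m, A k * w k m := by
        simp_rw [add_mul, ENNReal.tsum_add]
        rw [ENNReal.tsum_comm (f := fun m k => A k * w m k)]
        simp_rw [hw]
    _ ≤ 2 * C * ∑' m, A m := by rw [mul_assoc, two_mul]; exact add_le_add hrow hrow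

end ENNReal

theorem mul_add_one_sub_mul_add_mul_abs_sub_le_max {θ η : ℝ} (hη : η ≤ θ) (hη' : η ≤ 1 - θ)
    (x y : ℝ) : θ * x + (1 - θ) * y + η * |x - y| ≤ max x y := by
  rcases le_total x y with h | h
  · rw [max_eq_right h, abs_of_nonpos (sub_nonpos.2 h)]
    nlinarith
  · rw [max_eq_left h, abs_of_nonneg (sub_nonneg.2 h)]
    nlinarith

theorem two_rpow_max_le_two_pow_add_two_pow (x y : ℕ) :
    (2 : ℝ≥0∞) ^ max (x : ℝ) y ≤ 2 ^ x + 2 ^ y := by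
  rcases le_total x y with h | h
  · rw [max_eq_right (Nat.cast_le.2 h), rpow_natCast]
    exact le_add_self
  · rw [max_eq_left (Nat.cast_le.2 h), rpow_natCast]
    exact le_self_add

theorem prod_inv_two_pow_add_two_pow_le {ι : Type*} [Fintype ι] {θ η : ℝ} (hη : η ≤ θ)
    (hη' : η ≤ 1 - θ) (m k : ι → ℕ) :
    ∏ i, ((2 : ℝ≥0∞) ^ m i + 2 ^ k i)⁻¹ ≤
      2 ^ (-(θ * ∑ i, (m i : ℝ) + (1 - θ) * ∑ i, (k i : ℝ) + η * ∑ i, |(m i : ℝ) - k i|)) := by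
  have hsum : -(θ * ∑ i, (m i : ℝ) + (1 - θ) * ∑ i, (k i : ℝ) + η * ∑ i, |(m i : ℝ) - k i|) =
      ∑ i, -(θ * m i + (1 - θ) * k i + η * |(m i : ℝ) - k i|) := by
    simp only [mul_sum, ← sum_add_distrib, sum_neg_distrib]
  rw [hsum, rpow_sum two_ne_zero ofNat_ne_top]
  gcongr with i
  calc ((2 : ℝ≥0∞) ^ m i + 2 ^ k i)⁻¹ ≤ (2 ^ max (m i : ℝ) (k i))⁻¹ :=
        ENNReal.inv_le_inv' (two_rpow_max_le_two_pow_add_two_pow _ _)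
    _ = 2 ^ (-max (m i : ℝ) (k i)) := (rpow_neg _ _).symm
    _ ≤ 2 ^ (-(θ * m i + (1 - θ) * k i + η * |(m i : ℝ) - k i|)) :=
        rpow_le_rpow_of_exponent_le one_le_two <| neg_le_neg <|
          mul_add_one_sub_mul_add_mul_abs_sub_le_max hη hη' _ _

theorem tsum_prod_comp_sub_le_pow_tsum {ι : Type*} [Fintype ι] (f : ℤ → ℝ≥0∞) (m : ι → ℕ) :
    ∑' k : ι → ℕ, ∏ i, f (m i - k i) ≤ (∑' z, f z) ^ Fintype.card ι :=
  calc ∑' k : ι → ℕ, ∏ i, f (m i - k i) ≤ ∏ i, ∑' n : ℕ, f (m i - n) :=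
        ENNReal.tsum_pi_prod_le fun i (n : ℕ) => f (m i - n)
    _ ≤ ∏ _i : ι, ∑' z, f z := by
        gcongr with i
        exact ENNReal.tsum_comp_le_tsum_of_injective (fun a b h => by simpa using h) f
    _ = (∑' z, f z) ^ Fintype.card ι := by rw [prod_const, card_univ]

theorem tsum_two_rpow_neg_abs_div_lt_top {c : ℝ} (hc : 0 < c) :
    ∑' z : ℤ, (2 : ℝ≥0∞) ^ (-|(z : ℝ)| / c) < ⊤ := by
  set q : ℝ≥0∞ := 2 ^ (-1 / c)
  have hq : q < 1 :=
    rpow_lt_one_of_one_lt_of_neg one_lt_two (div_neg_of_neg_of_pos neg_one_lt_zero hc)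
  have hpow (z : ℤ) : (2 : ℝ≥0∞) ^ (-|(z : ℝ)| / c) = q ^ z.natAbs := by
    rw [← rpow_natCast, ← rpow_mul, Nat.cast_natAbs, Int.cast_abs]
    ring_nf
  have hneg (n : ℕ) : (-((n : ℤ) + 1)).natAbs = n + 1 := by omega
  simp_rw [hpow]
  rw [tsum_of_nat_of_neg_add_one ENNReal.summable ENNReal.summable]
  simp only [Int.natAbs_natCast, hneg, pow_succ, ENNReal.tsum_mul_right]
  have hgeom : ∑' n : ℕ, q ^ n < ⊤ := tsum_geometric_lt_top.2 hq
  exact add_lt_top.2 ⟨hgeom, mul_lt_top hgeom (hq.trans one_lt_top)⟩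

theorem tsum_two_rpow_neg_sum_abs_sub_div_le {ι : Type*} [Fintype ι] (c : ℝ) (m : ι → ℕ) :
    ∑' k : ι → ℕ, (2 : ℝ≥0∞) ^ (-(∑ i, |(m i : ℝ) - k i|) / c) ≤
      (∑' z : ℤ, (2 : ℝ≥0∞) ^ (-|(z : ℝ)| / c)) ^ Fintype.card ι := by
  have hprod (k : ι → ℕ) : (2 : ℝ≥0∞) ^ (-(∑ i, |(m i : ℝ) - k i|) / c) =
      ∏ i, (2 : ℝ≥0∞) ^ (-|(((m i : ℤ) - k i : ℤ) : ℝ)| / c) := by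
    rw [← rpow_sum two_ne_zero ofNat_ne_top]
    push_cast
    rw [← sum_div, sum_neg_distrib]
  simp_rw [hprod]
  exact tsum_prod_comp_sub_le_pow_tsum (fun z : ℤ => (2 : ℝ≥0∞) ^ (-|(z : ℝ)| / c)) m

theorem mul_rpow_mul_prod_inv_two_pow_add_rpow_le {ι : Type*} [Fintype ι] {s : ℝ} (hs : 0 < s)
    (x y : ℝ≥0∞) (m k : ι → ℕ) :
    x * (y ^ (1 / s) * (∏ i, ((2 : ℝ≥0∞) ^ m i + 2 ^ k i)⁻¹) ^ (1 / s)) ≤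
      (x ^ (1 + 1 / s) * 2 ^ (-(∑ i, (m i : ℝ)) / s) +
          y ^ (1 + 1 / s) * 2 ^ (-(∑ i, (k i : ℝ)) / s)) *
        2 ^ (-(∑ i, |(m i : ℝ) - k i|) / (s + 1) ^ 2) := by
  set Sm := ∑ i, (m i : ℝ)
  set Sk := ∑ i, (k i : ℝ)
  set T := ∑ i, |(m i : ℝ) - k i|
  have hK : (∏ i, ((2 : ℝ≥0∞) ^ m i + 2 ^ k i)⁻¹) ^ (1 / s) ≤
      2 ^ (-Sm / (s + 1)) * 2 ^ (-Sk / (s * (s + 1))) * 2 ^ (-T / (s + 1) ^ 2) := by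
    have hθ : s / (s + 1) ^ 2 ≤ s / (s + 1) := by
      gcongr; nlinarith
    have hθ' : s / (s + 1) ^ 2 ≤ 1 - s / (s + 1) := by
      rw [div_le_iff₀ (by positivity)]; field_simp; nlinarith
    calc _ ≤ (2 ^ (-(s / (s + 1) * Sm + (1 - s / (s + 1)) * Sk + s / (s + 1) ^ 2 * T))) ^
            (1 / s) := rpow_le_rpow (prod_inv_two_pow_add_two_pow_le hθ hθ' m k) (by positivity)
      _ = _ := by
          rw [← rpow_mul, ← rpow_add _ _ two_ne_zero ofNat_ne_top,
            ← rpow_add _ _ two_ne_zero ofNat_ne_top]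
          congr 1
          field_simp
          ring
  have hx : x * 2 ^ (-Sm / (s + 1)) = (x ^ (1 + 1 / s) * 2 ^ (-Sm / s)) ^ (s / (s + 1)) := by
    have hexp : (1 + 1 / s) * (s / (s + 1)) = 1 := by field_simp
    rw [mul_rpow_of_nonneg _ _ (by positivity), ← rpow_mul, ← rpow_mul, hexp, rpow_one]
    congr 2
    field_simp
  have hy : y ^ (1 / s) * 2 ^ (-Sk / (s * (s + 1))) =
      (y ^ (1 + 1 / s) * 2 ^ (-Sk / s)) ^ (1 / (s + 1)) := by
    rw [mul_rpow_of_nonneg _ _ (by positivity), ← rpow_mul, ← rpow_mul]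
    congr 2 <;> field_simp
  calc x * (y ^ (1 / s) * (∏ i, ((2 : ℝ≥0∞) ^ m i + 2 ^ k i)⁻¹) ^ (1 / s))
      ≤ x * (y ^ (1 / s) * (2 ^ (-Sm / (s + 1)) * 2 ^ (-Sk / (s * (s + 1))) *
          2 ^ (-T / (s + 1) ^ 2))) := by gcongr
    _ = x * 2 ^ (-Sm / (s + 1)) * (y ^ (1 / s) * 2 ^ (-Sk / (s * (s + 1)))) *
          2 ^ (-T / (s + 1) ^ 2) := by ring
    _ ≤ _ := by
        rw [hx, hy]
        gcongr
        exact rpow_mul_rpow_le_add (by positivity) (by positivity) (by field_simp) _ _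

theorem diagonal_double_sum_multiindex_general (s : ℝ) (hs : 1 ≤ s) (d : ℕ)
    (N : (Fin d → ℕ) → ℝ)
    (hsum : ∑' m : Fin d → ℕ,
        ENNReal.ofReal (N m) ^ (1 + 1 / s) * (2 : ℝ≥0∞) ^ (-(∑ i, (m i : ℝ)) / s) < ⊤) :
    ∑' m : Fin d → ℕ, ENNReal.ofReal (N m) *
      ∑' k : Fin d → ℕ, ENNReal.ofReal (N k) ^ (1 / s) *
        (∏ i, ((2 : ℝ≥0∞) ^ (m i) + (2 : ℝ≥0∞) ^ (k i))⁻¹) ^ (1 / s) < ⊤ := by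
  have hs₀ : 0 < s := by linarith
  set A : (Fin d → ℕ) → ℝ≥0∞ := fun m =>
    ENNReal.ofReal (N m) ^ (1 + 1 / s) * (2 : ℝ≥0∞) ^ (-(∑ i, (m i : ℝ)) / s)
  set w : (Fin d → ℕ) → (Fin d → ℕ) → ℝ≥0∞ := fun m k =>
    2 ^ (-(∑ i, |(m i : ℝ) - k i|) / (s + 1) ^ 2)
  have hw (m k : Fin d → ℕ) : w m k = w k m := by simp only [w, abs_sub_comm]
  have hC (m : Fin d → ℕ) := tsum_two_rpow_neg_sum_abs_sub_div_le ((s + 1) ^ 2) m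
  rw [Fintype.card_fin] at hC
  calc _ = ∑' m, ∑' k, ENNReal.ofReal (N m) * (ENNReal.ofReal (N k) ^ (1 / s) *
        (∏ i, ((2 : ℝ≥0∞) ^ (m i) + (2 : ℝ≥0∞) ^ (k i))⁻¹) ^ (1 / s)) := by
        simp_rw [ENNReal.tsum_mul_left]
    _ ≤ ∑' m, ∑' k, (A m + A k) * w m k :=
        ENNReal.tsum_le_tsum fun m => ENNReal.tsum_le_tsum fun k =>
          mul_rpow_mul_prod_inv_two_pow_add_rpow_le hs₀ _ _ m k
    _ ≤ 2 * (∑' z : ℤ, (2 : ℝ≥0∞) ^ (-|(z : ℝ)| / (s + 1) ^ 2)) ^ d * ∑' m, A m :=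
        ENNReal.tsum_tsum_add_mul_le A hw hC
    _ < ⊤ := mul_lt_top (mul_lt_top ofNat_lt_top
        (pow_lt_top (tsum_two_rpow_neg_abs_div_lt_top (by positivity)))) hsum

/-- Let `s ≥ 1`, `d ≥ 1` and `(N_m)_{m ∈ ℕ^d}` positive with
`∑_m N_m^{1+1/s} 2^{-|m|/s} < ∞`.  Then
`∑_m N_m ∑_k N_k^{1/s} (∏_i 1/(2^{m_i} + 2^{k_i}))^{1/s} < ∞`. -/
theorem diagonal_double_sum_multiindex (s : ℝ) (hs : 1 ≤ s) (d : ℕ) (hd : 1 ≤ d)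
    (N : (Fin d → ℕ) → ℝ) (hN : ∀ m, 0 < N m)
    (hsum : ∑' m : Fin d → ℕ,
        ENNReal.ofReal (N m) ^ (1 + 1 / s) * (2 : ℝ≥0∞) ^ (-(∑ i, (m i : ℝ)) / s) < ⊤) :
    ∑' m : Fin d → ℕ, ENNReal.ofReal (N m) *
      ∑' k : Fin d → ℕ, ENNReal.ofReal (N k) ^ (1 / s) *
        (∏ i, ((2 : ℝ≥0∞) ^ (m i) + (2 : ℝ≥0∞) ^ (k i))⁻¹) ^ (1 / s) < ⊤ :=
  diagonal_double_sum_multiindex_general s hs d N hsum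
end

section
/- Fix d ≥ 1 and let (X^i_{n,j})_{n,j∈ℕ}, for i = 1,…,d, be families of nonnegative random variables on a probability space (Ω,𝒜,ℙ). Set m(n,j) = min_{i=1,…,d} X^i_{n,j} and p(n,j) = ∏_{i=1}^d X^i_{n,j}. If ∑_{j∈ℕ} ( ∑_{k∈ℕ} 𝔼(p(k,j)) )^{1/d} < ∞, then the random variable sup_{n∈ℕ} ∑_{j≠n} m(n,j) is finite almost surely. -/
open MeasureTheory ENNReal

/- The minimum of `d` nonnegative numbers is at most the geometric mean `p(n,j)^(1/d)`, and
`p(n,j) ≤ ∑_k p(k,j)`; so every `m(n,j)` is dominated by `h_j := (∑_k p(k,j))^(1/d)`, which does not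
depend on `n`. By Jensen's inequality for the concave map `t ↦ t^(1/d)`,
`𝔼 h_j ≤ (∑_k 𝔼 p(k,j))^(1/d)`, hence `∑_j h_j` is integrable and thus finite almost surely, and it
bounds the supremum over `n`. -/

theorem ENNReal.iInf_le_prod_rpow_one_div_card {ι : Type*} [Fintype ι] [Nonempty ι]
    (f : ι → ℝ≥0∞) : ⨅ i, f i ≤ (∏ i, f i) ^ ((1 : ℝ) / Fintype.card ι) := by
  rw [one_div]
  calc ⨅ i, f i = ((⨅ i, f i) ^ Fintype.card ι) ^ ((Fintype.card ι : ℝ)⁻¹) :=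
        (pow_rpow_inv_natCast Fintype.card_ne_zero _).symm
    _ ≤ (∏ i, f i) ^ ((Fintype.card ι : ℝ)⁻¹) :=
        rpow_le_rpow (Finset.pow_card_le_prod _ _ _ fun i _ => iInf_le f i) (by positivity)

theorem ENNReal.ofReal_iInf_le_ofReal_prod_rpow_one_div_card {ι : Type*} [Fintype ι]
    [Nonempty ι] {x : ι → ℝ} (hx : ∀ i, 0 ≤ x i) :
    ENNReal.ofReal (⨅ i, x i) ≤ ENNReal.ofReal (∏ i, x i) ^ ((1 : ℝ) / Fintype.card ι) := by
  rw [ofReal_iInf, ofReal_prod_of_nonneg fun i _ => hx i]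
  exact iInf_le_prod_rpow_one_div_card _

theorem MeasureTheory.lintegral_rpow_one_div_le {Ω : Type*} [MeasurableSpace Ω] (μ : Measure Ω)
    [IsProbabilityMeasure μ] {p : ℝ} (hp : 1 ≤ p) {g : Ω → ℝ≥0∞} (hg : AEMeasurable g μ) :
    ∫⁻ ω, g ω ^ (1 / p) ∂μ ≤ (∫⁻ ω, g ω ∂μ) ^ (1 / p) := by
  have h := eLpNorm'_le_eLpNorm'_of_exponent_le one_pos hp μ
    (hg.pow_const (1 / p)).aestronglyMeasurable
  have hp0 : p ≠ 0 := by positivity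
  simpa [eLpNorm', ← rpow_mul, hp0] using h

theorem MeasureTheory.ae_iSup_tsum_lt_top_of_le {Ω ι κ : Type*} [MeasurableSpace Ω] [Countable κ]
    {μ : Measure Ω} {f : ι → κ → Ω → ℝ≥0∞} {h : κ → Ω → ℝ≥0∞}
    (hh : ∀ j, AEMeasurable (h j) μ) (hfh : ∀ n j ω, f n j ω ≤ h j ω)
    (hint : ∑' j, ∫⁻ ω, h j ω ∂μ ≠ ∞) :
    ∀ᵐ ω ∂μ, ⨆ n, ∑' j, f n j ω < ∞ := by
  have hsum : ∀ᵐ ω ∂μ, ∑' j, h j ω < ∞ :=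
    ae_lt_top' (AEMeasurable.tsum hh) (by rwa [lintegral_tsum hh])
  filter_upwards [hsum] with ω hω
  exact (iSup_le fun n => ENNReal.tsum_le_tsum fun j => hfh n j ω).trans_lt hω

/-- Let `(X^i_{n,j})` be nonnegative random variables, `i = 1,…,d`,
`m(n,j) = min_i X^i_{n,j}`, `p(n,j) = ∏_i X^i_{n,j}`.  If
`∑_j (∑_k 𝔼(p(k,j)))^{1/d} < ∞` then `sup_n ∑_{j ≠ n} m(n,j)` is finite almost surely. -/
theorem sup_min_sum_finite_ae {Ω : Type*} [MeasurableSpace Ω] (P : Measure Ω)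
    [IsProbabilityMeasure P] (d : ℕ) (hd : 1 ≤ d)
    (X : Fin d → ℕ → ℕ → Ω → ℝ)
    (hX_nonneg : ∀ i n j ω, 0 ≤ X i n j ω)
    (hX_meas : ∀ i n j, Measurable (X i n j))
    (hsum : ∑' j : ℕ,
        (∑' k : ℕ, ∫⁻ ω, ENNReal.ofReal (∏ i, X i k j ω) ∂P) ^ ((1 : ℝ) / d) < ⊤) :
    ∀ᵐ ω ∂P,
      (⨆ n : ℕ, ∑' j : ℕ,
        if j = n then 0 else ENNReal.ofReal (⨅ i, X i n j ω)) < ⊤ := by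
  have : Nonempty (Fin d) := ⟨⟨0, hd⟩⟩
  set p : ℕ → ℕ → Ω → ℝ≥0∞ := fun k j ω => ENNReal.ofReal (∏ i, X i k j ω)
  have hp_meas : ∀ k j, Measurable (p k j) := fun k j =>
    (Finset.measurable_prod _ fun i _ => hX_meas i k j).ennreal_ofReal
  have hsum_meas : ∀ j, Measurable fun ω => ∑' k, p k j ω := fun j =>
    Measurable.tsum fun k => hp_meas k j
  have hint_le : ∀ j, ∫⁻ ω, (∑' k, p k j ω) ^ ((1 : ℝ) / d) ∂P ≤
      (∑' k, ∫⁻ ω, p k j ω ∂P) ^ ((1 : ℝ) / d) := fun j => by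
    rw [← lintegral_tsum fun k => (hp_meas k j).aemeasurable]
    exact lintegral_rpow_one_div_le P (by exact_mod_cast hd) (hsum_meas j).aemeasurable
  refine ae_iSup_tsum_lt_top_of_le (h := fun j ω => (∑' k, p k j ω) ^ ((1 : ℝ) / d))
    (fun j => ((hsum_meas j).pow_const _).aemeasurable) (fun n j ω => ?_)
    ((ENNReal.tsum_le_tsum hint_le).trans_lt hsum).ne
  split_ifs
  · exact zero_le
  · calc ENNReal.ofReal (⨅ i, X i n j ω) ≤ p n j ω ^ ((1 : ℝ) / d) := by
          simpa using ofReal_iInf_le_ofReal_prod_rpow_one_div_card (hX_nonneg · n j ω)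
      _ ≤ (∑' k, p k j ω) ^ ((1 : ℝ) / d) := rpow_le_rpow (ENNReal.le_tsum n) (by positivity)
end

section
/- Let Λ be a random sequence in the polydisc 𝔻^d. There exist constants c_d, C_d > 0 depending only on d such that for all n ≠ j and all multi-indices m, k ∈ ℕ^d with λ_n ∈ I_m and λ_j ∈ I_k, one has c_d ∏_{i=1}^d 1/(2^{m_i}+2^{k_i}) ≤ 𝔼(|S_d(λ_n,λ_j)|²) ≤ C_d ∏_{i=1}^d 1/(2^{m_i}+2^{k_i}). -/
open MeasureTheory ProbabilityTheory Complex Set ENNReal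

noncomputable section

/-- A random sequence in the polydisc `𝔻^d`, indexed by `ι`: deterministic radii
`r n ∈ [0,1)^d` and arguments `θ n i` uniformly distributed on `[0, 2π)`, with the whole
family `{θ n i}` independent.  The random point is `λ_n(ω) = (r_n^i e^{i θ_n^i(ω)})_i`. -/
structure RandomPolydiscSeq (d : ℕ) (ι : Type*) (Ω : Type*) [MeasurableSpace Ω]
    (P : MeasureTheory.Measure Ω) where
  r : ι → Fin d → ℝ
  r_mem : ∀ n i, r n i ∈ Set.Ico (0 : ℝ) 1
  θ : ι → Fin d → Ω → ℝ
  θ_meas : ∀ n i, Measurable (θ n i)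
  θ_unif : ∀ n i, MeasureTheory.Measure.map (θ n i) P
      = (ENNReal.ofReal (2 * Real.pi))⁻¹ • volume.restrict (Set.Ico (0 : ℝ) (2 * Real.pi))
  θ_indep : iIndepFun (fun (p : ι × Fin d) ω => θ p.1 p.2 ω) P

namespace RandomPolydiscSeq

variable {d : ℕ} {ι Ω : Type*} [MeasurableSpace Ω] {P : MeasureTheory.Measure Ω}

/-- The random point `λ_n(ω) ∈ 𝔻^d`. -/
def pt (Λ : RandomPolydiscSeq d ι Ω P) (n : ι) (ω : Ω) : Fin d → ℂ :=
  fun i => (Λ.r n i : ℂ) * Complex.exp (Complex.I * (Λ.θ n i ω : ℂ))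

/-- `λ_n ∈ I_m`, i.e. `1 - 2^{-m_i} ≤ |λ_n^i| < 1 - 2^{-(m_i+1)}` for all `i`
(this depends only on the deterministic radii). -/
def inShell (Λ : RandomPolydiscSeq d ι Ω P) (n : ι) (m : Fin d → ℕ) : Prop :=
  ∀ i, 1 - (2 : ℝ) ^ (-(m i : ℤ)) ≤ Λ.r n i ∧ Λ.r n i < 1 - (2 : ℝ) ^ (-((m i : ℤ) + 1))

/-- `N_m = #(Λ ∩ I_m)`, as an extended nonnegative real. -/
def N (Λ : RandomPolydiscSeq d ι Ω P) (m : Fin d → ℕ) : ℝ≥0∞ :=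
  ({n : ι | Λ.inShell n m}).encard

end RandomPolydiscSeq

/-- The pseudo-hyperbolic distance `ρ(z,w) = |z-w| / |1 - z̄ w|` on the unit disc. -/
def pseudoHyp (z w : ℂ) : ℝ := ‖z - w‖ / ‖1 - (starRingEnd ℂ) z * w‖

/-- The Gleason distance `ρ_G(z,w) = max_i ρ(z^i, w^i)` on the polydisc. -/
def gleason {d : ℕ} (z w : Fin d → ℂ) : ℝ := ⨆ i, pseudoHyp (z i) (w i)

/-- The normalized Szegö kernel on the polydisc. -/
def szego {d : ℕ} (z w : Fin d → ℂ) : ℂ :=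
  ∏ i, ((Real.sqrt ((1 - ‖z i‖ ^ 2) * (1 - ‖w i‖ ^ 2)) : ℂ)
      / (1 - z i * (starRingEnd ℂ) (w i)))

namespace RandomPolydiscSeq

variable {d : ℕ} {ι Ω : Type*} [MeasurableSpace Ω] {P : MeasureTheory.Measure Ω}

/-- The realization `Λ(ω)` is weakly separated: `inf_{n ≠ k} ρ_G(λ_n, λ_k) > 0`. -/
def WeaklySeparated (Λ : RandomPolydiscSeq d ι Ω P) (ω : Ω) : Prop :=
  ∃ c > 0, ∀ n k : ι, n ≠ k → c ≤ gleason (Λ.pt n ω) (Λ.pt k ω)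

/-- The realization `Λ(ω)` is uniformly separated: `inf_n ∏_{k ≠ n} ρ_G(λ_n, λ_k) > 0`.
Since all factors lie in `[0,1)`, the infinite product is the infimum of the finite
partial products, so this is expressed via finite subproducts. -/
def UniformlySeparated (Λ : RandomPolydiscSeq d ι Ω P) (ω : Ω) : Prop :=
  ∃ c > 0, ∀ n : ι, ∀ F : Finset ι, n ∉ F →
    c ≤ ∏ k ∈ F, gleason (Λ.pt n ω) (Λ.pt k ω)

/-- The realization `Λ(ω)` is interpolating for `H^∞(𝔻^d)`. -/
def InterpolatingHinf (Λ : RandomPolydiscSeq d ι Ω P) (ω : Ω) : Prop :=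
  ∀ w : ι → ℂ, (∃ M : ℝ, ∀ n, ‖w n‖ ≤ M) →
    ∃ f : (Fin d → ℂ) → ℂ,
      DifferentiableOn ℂ f {ζ | ∀ i, ‖ζ i‖ < 1} ∧
      (∃ M : ℝ, ∀ ζ : Fin d → ℂ, (∀ i, ‖ζ i‖ < 1) → ‖f ζ‖ ≤ M) ∧
      ∀ n, f (Λ.pt n ω) = w n

end RandomPolydiscSeq

/-!
Write `λ_n^i = r e^{iθ}` and `λ_j^i = s e^{iφ}`. Since `1 - λ_n^i \overline{λ_j^i}` has the same
modulus as `e^{iφ} - rs e^{iθ}`, the `i`-th factor of `|S_d(λ_n, λ_j)|²` is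
`(1 - r²)(1 - s²)/(1 - r²s²)` times the Poisson kernel of the unit disc for the point `rs e^{iθ}`,
evaluated at `e^{iφ}`. For `n ≠ j` the `2d` angles involved are independent and uniform, so the
expectation factors over the coordinates and each Poisson kernel averages to `1` over the circle:
`𝔼|S_d(λ_n, λ_j)|² = ∏_i (1 - r_i²)(1 - s_i²)/(1 - r_i²s_i²) = ∏_i (u_i⁻¹ + v_i⁻¹ - 1)⁻¹`
with `u_i = 1 - r_i²`, `v_i = 1 - s_i²`. In the shells `I_m`, `I_k` one has `u_i⁻¹ ≍ 2^{m_i}` and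
`v_i⁻¹ ≍ 2^{k_i}`, which gives both bounds.
-/

abbrev uniformAngle : Measure ℝ :=
  (ENNReal.ofReal (2 * Real.pi))⁻¹ • volume.restrict (Ico 0 (2 * Real.pi))

instance : IsProbabilityMeasure uniformAngle := by
  constructor
  rw [Measure.smul_apply, Measure.restrict_apply_univ, Real.volume_Ico, sub_zero, smul_eq_mul,
    ENNReal.inv_mul_cancel (by positivity) ENNReal.ofReal_ne_top]

lemma integral_uniformAngle_circleMap {E : Type*} [NormedAddCommGroup E] [NormedSpace ℝ E]
    (g : ℂ → E) (c : ℂ) (R : ℝ) :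
    ∫ y, g (circleMap c R y) ∂uniformAngle = Real.circleAverage g c R := by
  rw [integral_smul_measure, ENNReal.toReal_inv, ENNReal.toReal_ofReal Real.two_pi_pos.le,
    Real.circleAverage_def, intervalIntegral.integral_of_le Real.two_pi_pos.le,
    integral_Ico_eq_integral_Ioo, integral_Ioc_eq_integral_Ioo]

lemma circleAverage_poissonKernel {c w : ℂ} {R : ℝ} (hw : w ∈ Metric.ball c R) :
    Real.circleAverage (poissonKernel c w) c R = 1 := by
  have h := InnerProductSpace.HarmonicContOnCl.circleAverage_poissonKernel_smul
    (f := fun _ ↦ (1 : ℝ)) InnerProductSpace.harmonicContOnCl_const hw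
  rwa [show poissonKernel c w • (fun _ ↦ (1 : ℝ)) = poissonKernel c w by ext; simp] at h

lemma abs_poissonKernel_le {w z : ℂ} {ρ : ℝ} (hz : ‖z‖ = 1) (hw : ‖w‖ ≤ ρ) (hρ : ρ < 1) :
    |poissonKernel 0 w z| ≤ (1 + ρ) / (1 - ρ) := by
  have hz' : z ∈ Metric.sphere (0 : ℂ) 1 := by simpa using hz
  have hw' : w ∈ Metric.ball (0 : ℂ) 1 := by simpa using hw.trans_lt hρ
  have hP : poissonKernel 0 w z = ((z - 0 + (w - 0)) / ((z - 0) - (w - 0))).re :=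
    congrFun poissonKernel_eq_re_herglotzRieszKernel z
  have hlow := le_re_herglotzRieszKernel hz' hw'
  have hup := re_herglotzRieszKernel_le hz' hw'
  simp only [sub_zero] at hP hlow hup
  have hw1 : ‖w‖ < 1 := hw.trans_lt hρ
  have hP0 : 0 ≤ poissonKernel 0 w z :=
    hP ▸ (div_nonneg (sub_nonneg.2 hw1.le) (by positivity)).trans hlow
  rw [abs_of_nonneg hP0, hP]
  refine hup.trans ?_
  gcongr
  linarith [norm_nonneg w]

lemma integral_poissonKernel_circleMap_prod {α : Type*} [MeasurableSpace α] (ν : Measure α)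
    [IsProbabilityMeasure ν] {w : α → ℂ} (hw : Measurable w) {ρ : ℝ} (hwρ : ∀ x, ‖w x‖ ≤ ρ)
    (hρ : ρ < 1) :
    ∫ q, poissonKernel 0 (w q.1) (circleMap 0 1 q.2) ∂(ν.prod uniformAngle) = 1 := by
  have hmeas : Measurable fun q : α × ℝ ↦ poissonKernel 0 (w q.1) (circleMap 0 1 q.2) := by
    unfold poissonKernel
    fun_prop
  have hint : Integrable (fun q : α × ℝ ↦ poissonKernel 0 (w q.1) (circleMap 0 1 q.2))
      (ν.prod uniformAngle) :=
    .of_bound hmeas.aestronglyMeasurable ((1 + ρ) / (1 - ρ)) <| ae_of_all _ fun q ↦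
      (Real.norm_eq_abs _).trans_le (abs_poissonKernel_le (by simp) (hwρ _) hρ)
  have inner (x : α) : ∫ y, poissonKernel 0 (w x) (circleMap 0 1 y) ∂uniformAngle = 1 := by
    rw [integral_uniformAngle_circleMap, circleAverage_poissonKernel]
    simpa using (hwρ x).trans_lt hρ
  simp [integral_prod _ hint, inner]

namespace ProbabilityTheory.iIndepFun

variable {Ω ι κ α : Type*} [MeasurableSpace Ω] [MeasurableSpace α] [Fintype κ] {P : Measure Ω}
  {X : ι → κ → Ω → α}

lemma map_pair_eq_pi_prod (hX : iIndepFun (fun p : ι × κ ↦ X p.1 p.2) P)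
    (mX : ∀ i k, Measurable (X i k)) {a b : ι} (hab : a ≠ b) :
    P.map (fun ω k ↦ (X a k ω, X b k ω))
      = Measure.pi fun k ↦ (P.map (X a k)).prod (P.map (X b k)) := by
  have := hX.isProbabilityMeasure
  let g : κ ⊕ κ → ι × κ := Sum.elim (a, ·) (b, ·)
  have hg : g.Injective := by
    rintro (k | k) (l | l) h <;> simp_all [g, Prod.ext_iff, hab.symm]
  have hY := (hX.precomp hg).map_fun_eq_pi_map fun s ↦ (mX _ _).aemeasurable
  let e₁ := MeasurableEquiv.sumPiEquivProdPi fun _ : κ ⊕ κ ↦ α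
  let e₂ := (MeasurableEquiv.arrowProdEquivProdArrow α α κ).symm
  have hcomp : (fun ω k ↦ (X a k ω, X b k ω))
      = e₂ ∘ e₁ ∘ fun ω s ↦ X (g s).1 (g s).2 ω := rfl
  rw [hcomp, ← Measure.map_map (by fun_prop) (by fun_prop),
    ← Measure.map_map (by fun_prop) (by fun_prop), hY,
    (measurePreserving_sumPiEquivProdPi _).map_eq,
    (measurePreserving_arrowProdEquivProdArrow α α κ _ _).symm.map_eq]
  rfl

lemma integral_fun_prod_pair {𝕜 : Type*} [RCLike 𝕜]
    (hX : iIndepFun (fun p : ι × κ ↦ X p.1 p.2) P) (mX : ∀ i k, Measurable (X i k))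
    {a b : ι} (hab : a ≠ b) {f : κ → α × α → 𝕜} (hf : ∀ k, Measurable (f k)) :
    ∫ ω, ∏ k, f k (X a k ω, X b k ω) ∂P
      = ∏ k, ∫ q, f k q ∂((P.map (X a k)).prod (P.map (X b k))) := by
  have := hX.isProbabilityMeasure
  rw [← integral_fintype_prod_eq_prod, ← hX.map_pair_eq_pi_prod mX hab]
  exact (integral_map (by fun_prop) (Finset.measurable_prod _ fun k _ ↦
    (hf k).comp (measurable_pi_apply k)).aestronglyMeasurable).symm

end ProbabilityTheory.iIndepFun

lemma norm_sq_szego {d : ℕ} {z w : Fin d → ℂ} (hz : ∀ i, ‖z i‖ ≤ 1) (hw : ∀ i, ‖w i‖ ≤ 1) :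
    ‖szego z w‖ ^ 2
      = ∏ i, (1 - ‖z i‖ ^ 2) * (1 - ‖w i‖ ^ 2) / ‖1 - z i * starRingEnd ℂ (w i)‖ ^ 2 := by
  rw [szego, norm_prod, ← Finset.prod_pow]
  refine Finset.prod_congr rfl fun i _ ↦ ?_
  have h0 : 0 ≤ (1 - ‖z i‖ ^ 2) * (1 - ‖w i‖ ^ 2) :=
    mul_nonneg (by nlinarith [hz i, norm_nonneg (z i)]) (by nlinarith [hw i, norm_nonneg (w i)])
  rw [norm_div, div_pow, Complex.norm_real, Real.norm_of_nonneg (Real.sqrt_nonneg _),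
    Real.sq_sqrt h0]

lemma one_sub_sq_mul_div_eq_poissonKernel {r s : ℝ} (hr : 0 ≤ r) (hs : 0 ≤ s) (hrs : r * s < 1)
    (x y : ℝ) :
    (1 - r ^ 2) * (1 - s ^ 2)
        / ‖1 - r * exp (I * x) * starRingEnd ℂ (s * exp (I * y))‖ ^ 2
      = (1 - r ^ 2) * (1 - s ^ 2) / (1 - (r * s) ^ 2)
        * poissonKernel 0 ((r * s : ℝ) * exp (x * I)) (circleMap 0 1 y) := by
  have hconj : starRingEnd ℂ (exp (I * y)) = (exp (I * y))⁻¹ := by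
    rw [← Complex.exp_conj, ← Complex.exp_neg, map_mul, Complex.conj_I, Complex.conj_ofReal,
      neg_mul]
  have hfactor : 1 - r * exp (I * x) * starRingEnd ℂ (s * exp (I * y))
      = (exp (I * y))⁻¹ * (circleMap 0 1 y - (r * s : ℝ) * exp (x * I)) := by
    rw [map_mul, Complex.conj_ofReal, hconj, circleMap]
    field_simp
    push_cast
    ring_nf
  have hnorm : ‖(r * s : ℝ) * exp (x * I)‖ = r * s := by
    rw [norm_mul, Complex.norm_real, Real.norm_of_nonneg (mul_nonneg hr hs),
      Complex.norm_exp_ofReal_mul_I, mul_one]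
  have hpos : 0 < 1 - (r * s) ^ 2 := by nlinarith [mul_nonneg hr hs]
  rw [hfactor, norm_mul, norm_inv, Complex.norm_exp_I_mul_ofReal, inv_one, one_mul,
    poissonKernel_def]
  simp only [sub_zero]
  rw [hnorm, norm_circleMap_zero, abs_one, one_pow, div_mul_div_comm,
    mul_comm (1 - (r * s) ^ 2), mul_div_mul_right _ _ hpos.ne']

namespace RandomPolydiscSeq

variable {d : ℕ} {ι Ω : Type*} [MeasurableSpace Ω] {P : Measure Ω}

lemma norm_pt_apply (Λ : RandomPolydiscSeq d ι Ω P) (n : ι) (ω : Ω) (i : Fin d) :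
    ‖Λ.pt n ω i‖ = Λ.r n i := by
  rw [pt, norm_mul, Complex.norm_real, Real.norm_of_nonneg (Λ.r_mem n i).1,
    Complex.norm_exp_I_mul_ofReal, mul_one]

theorem integral_norm_sq_szego (Λ : RandomPolydiscSeq d ι Ω P) {n j : ι} (hnj : n ≠ j) :
    ∫ ω, ‖szego (Λ.pt n ω) (Λ.pt j ω)‖ ^ 2 ∂P
      = ∏ i, (1 - Λ.r n i ^ 2) * (1 - Λ.r j i ^ 2) / (1 - (Λ.r n i * Λ.r j i) ^ 2) := by
  have hr (n : ι) (i : Fin d) := Λ.r_mem n i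
  have hnorm (n : ι) (ω : Ω) (i : Fin d) : ‖Λ.pt n ω i‖ ≤ 1 :=
    (Λ.norm_pt_apply n ω i).trans_le (hr n i).2.le
  have hrs (i : Fin d) : Λ.r n i * Λ.r j i < 1 :=
    mul_lt_one_of_nonneg_of_lt_one_left (hr n i).1 (hr n i).2 (hr j i).2.le
  let F (i : Fin d) (q : ℝ × ℝ) : ℝ :=
    (1 - Λ.r n i ^ 2) * (1 - Λ.r j i ^ 2) / (1 - (Λ.r n i * Λ.r j i) ^ 2)
      * poissonKernel 0 ((Λ.r n i * Λ.r j i : ℝ) * exp (q.1 * I)) (circleMap 0 1 q.2)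
  have hF : ∀ ω, ‖szego (Λ.pt n ω) (Λ.pt j ω)‖ ^ 2 = ∏ i, F i (Λ.θ n i ω, Λ.θ j i ω) := by
    intro ω
    rw [norm_sq_szego (hnorm n ω) (hnorm j ω)]
    refine Finset.prod_congr rfl fun i _ ↦ ?_
    rw [Λ.norm_pt_apply, Λ.norm_pt_apply]
    exact one_sub_sq_mul_div_eq_poissonKernel (hr n i).1 (hr j i).1 (hrs i) _ _
  have hFmeas (i : Fin d) : Measurable (F i) := by
    unfold F poissonKernel
    fun_prop
  have hθ (n : ι) (i : Fin d) : P.map (Λ.θ n i) = uniformAngle := Λ.θ_unif n i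
  simp_rw [hF]
  rw [Λ.θ_indep.integral_fun_prod_pair Λ.θ_meas hnj hFmeas]
  refine Finset.prod_congr rfl fun i _ ↦ ?_
  rw [hθ, hθ, integral_const_mul, integral_poissonKernel_circleMap_prod _
    (w := fun x : ℝ ↦ (Λ.r n i * Λ.r j i : ℝ) * exp (x * I)) (by fun_prop) (fun x ↦ ?_) (hrs i),
    mul_one]
  rw [norm_mul, Complex.norm_real, Real.norm_of_nonneg (mul_nonneg (hr n i).1 (hr j i).1),
    Complex.norm_exp_ofReal_mul_I, mul_one]

end RandomPolydiscSeq

lemma one_sub_sq_bounds_of_shell {r : ℝ} {m : ℕ}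
    (h : 1 - (2 : ℝ) ^ (-(m : ℤ)) ≤ r ∧ r < 1 - (2 : ℝ) ^ (-((m : ℤ) + 1))) :
    0 < 1 - r ^ 2 ∧ 2 ^ m / 2 ≤ (1 - r ^ 2)⁻¹ ∧ (1 - r ^ 2)⁻¹ ≤ 2 * 2 ^ m := by
  obtain ⟨h₁, h₂⟩ := h
  rw [zpow_neg, zpow_natCast] at h₁
  rw [zpow_neg, zpow_add_one₀ two_ne_zero, zpow_natCast] at h₂
  have hA : (1 : ℝ) ≤ 2 ^ m := one_le_pow₀ one_le_two
  have hinv : ((2 : ℝ) ^ m)⁻¹ ≤ 1 := inv_le_one_of_one_le₀ hA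
  have hr₀ : 0 ≤ r := by linarith
  have hr₁ : r < 1 := h₂.trans_le (by linarith [inv_nonneg.2 (by positivity : (0 : ℝ) ≤ 2 ^ m * 2)])
  have hlow : (2 ^ m * 2 : ℝ)⁻¹ < 1 - r ^ 2 := by
    nlinarith [mul_nonneg hr₀ (sub_nonneg.2 hr₁.le)]
  have hup : 1 - r ^ 2 ≤ 2 * ((2 : ℝ) ^ m)⁻¹ := by nlinarith [sq_nonneg (1 - r)]
  refine ⟨(inv_pos.2 (by positivity)).trans hlow, ?_, ?_⟩
  · calc (2 : ℝ) ^ m / 2 = (2 * ((2 : ℝ) ^ m)⁻¹)⁻¹ := by field_simp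
      _ ≤ (1 - r ^ 2)⁻¹ := inv_anti₀ ((inv_pos.2 (by positivity)).trans hlow) hup
  · calc (1 - r ^ 2)⁻¹ ≤ ((2 ^ m * 2 : ℝ)⁻¹)⁻¹ := inv_anti₀ (by positivity) hlow.le
      _ = 2 * 2 ^ m := by rw [inv_inv, mul_comm]

lemma szego_factor_bounds_of_shell {r s : ℝ} {m k : ℕ}
    (hr : 1 - (2 : ℝ) ^ (-(m : ℤ)) ≤ r ∧ r < 1 - (2 : ℝ) ^ (-((m : ℤ) + 1)))
    (hs : 1 - (2 : ℝ) ^ (-(k : ℤ)) ≤ s ∧ s < 1 - (2 : ℝ) ^ (-((k : ℤ) + 1))) :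
    2⁻¹ * ((2 : ℝ) ^ m + 2 ^ k)⁻¹ ≤ (1 - r ^ 2) * (1 - s ^ 2) / (1 - (r * s) ^ 2) ∧
      (1 - r ^ 2) * (1 - s ^ 2) / (1 - (r * s) ^ 2) ≤ 4 * ((2 : ℝ) ^ m + 2 ^ k)⁻¹ := by
  obtain ⟨hu, hu_ge, hu_le⟩ := one_sub_sq_bounds_of_shell hr
  obtain ⟨hv, hv_ge, hv_le⟩ := one_sub_sq_bounds_of_shell hs
  have hu1 : 1 ≤ (1 - r ^ 2)⁻¹ := one_le_inv₀ hu |>.2 (by nlinarith)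
  have hv1 : 1 ≤ (1 - s ^ 2)⁻¹ := one_le_inv₀ hv |>.2 (by nlinarith)
  -- `1 - r²s² = u + v - uv` for `u = 1 - r²`, `v = 1 - s²`
  have hfactor : (1 - r ^ 2) * (1 - s ^ 2) / (1 - (r * s) ^ 2)
      = ((1 - r ^ 2)⁻¹ + (1 - s ^ 2)⁻¹ - 1)⁻¹ := by
    field_simp
    ring
  have hA : (0 : ℝ) < 2 ^ m + 2 ^ k := by positivity
  rw [hfactor]
  constructor
  · calc 2⁻¹ * ((2 : ℝ) ^ m + 2 ^ k)⁻¹ = (2 * (2 ^ m + 2 ^ k))⁻¹ := by rw [mul_inv]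
      _ ≤ _ := inv_anti₀ (by linarith) (by linarith)
  · calc ((1 - r ^ 2)⁻¹ + (1 - s ^ 2)⁻¹ - 1)⁻¹ ≤ ((2 ^ m + 2 ^ k) / 4)⁻¹ :=
          inv_anti₀ (by positivity) (by linarith)
      _ = 4 * ((2 : ℝ) ^ m + 2 ^ k)⁻¹ := by rw [inv_div, div_eq_mul_inv]

theorem expected_szego_two_sided_bound_general (d : ℕ)
    (Ω : Type*) [MeasurableSpace Ω] (P : MeasureTheory.Measure Ω) :
    ∃ c C : ℝ, 0 < c ∧ 0 < C ∧
      ∀ (Λ : RandomPolydiscSeq d ℕ Ω P) (n j : ℕ), n ≠ j →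
        ∀ m k : Fin d → ℕ, Λ.inShell n m → Λ.inShell j k →
          c * ∏ i, ((2 : ℝ) ^ (m i) + (2 : ℝ) ^ (k i))⁻¹
              ≤ ∫ ω, ‖szego (Λ.pt n ω) (Λ.pt j ω)‖ ^ 2 ∂P ∧
          ∫ ω, ‖szego (Λ.pt n ω) (Λ.pt j ω)‖ ^ 2 ∂P
              ≤ C * ∏ i, ((2 : ℝ) ^ (m i) + (2 : ℝ) ^ (k i))⁻¹ := by
  refine ⟨2⁻¹ ^ d, 4 ^ d, by positivity, by positivity, fun Λ n j hnj m k hm hk ↦ ?_⟩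
  have hbounds (i : Fin d) := szego_factor_bounds_of_shell (hm i) (hk i)
  have hpow (c : ℝ) : c ^ d * ∏ i, ((2 : ℝ) ^ m i + 2 ^ k i)⁻¹
      = ∏ i, c * ((2 : ℝ) ^ m i + 2 ^ k i)⁻¹ := by
    simp [Finset.prod_mul_distrib]
  rw [Λ.integral_norm_sq_szego hnj, hpow, hpow]
  exact ⟨Finset.prod_le_prod (fun i _ ↦ by positivity) fun i _ ↦ (hbounds i).1,
    Finset.prod_le_prod (fun i _ ↦ (by positivity : (0 : ℝ) ≤ _).trans (hbounds i).1)
      fun i _ ↦ (hbounds i).2⟩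

/-- There are constants `c_d, C_d > 0` depending only on `d` such that, for any
random sequence `Λ` in `𝔻^d`, all `n ≠ j` and multi-indices `m, k` with `λ_n ∈ I_m`, `λ_j ∈ I_k`,
`c_d ∏_i (2^{m_i}+2^{k_i})⁻¹ ≤ 𝔼(|S_d(λ_n,λ_j)|²) ≤ C_d ∏_i (2^{m_i}+2^{k_i})⁻¹`. -/
theorem expected_szego_two_sided_bound (d : ℕ) (hd : 1 ≤ d)
    (Ω : Type*) [MeasurableSpace Ω] (P : MeasureTheory.Measure Ω) [IsProbabilityMeasure P] :
    ∃ c C : ℝ, 0 < c ∧ 0 < C ∧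
      ∀ (Λ : RandomPolydiscSeq d ℕ Ω P) (n j : ℕ), n ≠ j →
        ∀ m k : Fin d → ℕ, Λ.inShell n m → Λ.inShell j k →
          c * ∏ i, ((2 : ℝ) ^ (m i) + (2 : ℝ) ^ (k i))⁻¹
              ≤ ∫ ω, ‖szego (Λ.pt n ω) (Λ.pt j ω)‖ ^ 2 ∂P ∧
          ∫ ω, ‖szego (Λ.pt n ω) (Λ.pt j ω)‖ ^ 2 ∂P
              ≤ C * ∏ i, ((2 : ℝ) ^ (m i) + (2 : ℝ) ^ (k i))⁻¹ :=
  expected_szego_two_sided_bound_general d Ω P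
end
end
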